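/- arXiv:2509.06880 — 2 statements merged into one kernel-verified Lean document; each statement's English description precedes it below -/
import Mathlib

section
/- Let G be a finite simple undirected graph and, for each integer r with 1 ≤ r ≤ |V(G)|, let 𝒞_r be an r-cut decomposition of G. Then there exists a vi-set S of G satisfying: (1) S contains no redundant vertex; and (2) there exists an integer r such that S is a minimum-size modulator for coc_r(G) and for each pair (C, cut(C)) ∈ 𝒞_r the following hold: if N(C) \ S ⊆ cut(C) then C ∩ S = ∅, and if N(C) \ S ⊆ cut(C) and |C| = r then cut(C) ⊆ S. -/
namespace ParamReport

open SimpleGraph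

variable {V : Type*} {U : Type*}

/-- The number of vertices in a largest connected component of `H` (`0` if `H` has no
vertices). -/
noncomputable def cc {W : Type*} (H : SimpleGraph W) : ℕ :=
  sSup {n | ∃ c : H.ConnectedComponent, n = c.supp.ncard}

/-- `cc` of the graph `G − S`, the subgraph of `G` induced on `V(G) \ S`. -/
noncomputable def ccDel (G : SimpleGraph V) (S : Set V) : ℕ :=
  cc (G.induce Sᶜ)

/-- The vertex integrity `vi(G) = min { |X| + cc(G − X) : X ⊆ V(G) }`. -/
noncomputable def vi (G : SimpleGraph V) : ℕ :=
  sInf {n | ∃ X : Set V, n = X.ncard + ccDel G X}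

/-- `X` is a vi-set of `G` if `vi(G) = |X| + cc(G − X)`. -/
def IsViSet (G : SimpleGraph V) (X : Set V) : Prop :=
  vi G = X.ncard + ccDel G X

/-- `S` is a modulator for `coc_r(G)`: every connected component of `G − S` has at most
`r` vertices, i.e. `cc(G − S) ≤ r`. -/
def IsModulator (G : SimpleGraph V) (r : ℕ) (S : Set V) : Prop :=
  ccDel G S ≤ r

/-- `S` is a minimum-size modulator for `coc_r(G)`. -/
def IsMinModulator (G : SimpleGraph V) (r : ℕ) (S : Set V) : Prop :=
  IsModulator G r S ∧ ∀ T : Set V, IsModulator G r T → S.ncard ≤ T.ncard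

/-- The `r`-component order connectivity number: the size of a smallest modulator for
`coc_r(G)`. -/
noncomputable def coc (G : SimpleGraph V) (r : ℕ) : ℕ :=
  sInf {n | ∃ S : Set V, IsModulator G r S ∧ n = S.ncard}

/-- The open neighborhood `N(X) = (⋃ v ∈ X, N(v)) \ X` of a vertex set `X`. -/
def openNbhdSet (G : SimpleGraph V) (X : Set V) : Set V :=
  (⋃ v ∈ X, G.neighborSet v) \ X

/-- The closed neighborhood `N[X] = N(X) ∪ X` of a vertex set `X`. -/
def closedNbhdSet (G : SimpleGraph V) (X : Set V) : Set V :=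
  openNbhdSet G X ∪ X

/-- A vertex `v ∈ S` is redundant with respect to `S` if at most one connected component
of `G − S` contains neighbors of `v`. -/
def Redundant (G : SimpleGraph V) (S : Set V) (v : V) : Prop :=
  Set.Subsingleton {c : (G.induce Sᶜ).ConnectedComponent | ∃ w, w ∈ c.supp ∧ G.Adj v ↑w}

/-- The vertex connectivity of `G[X]`: the smallest size of a set `Z ⊆ X` such that
`G[X \ Z]` has more than one connected component. -/
noncomputable def conn (G : SimpleGraph V) (X : Set V) : ℕ :=
  sInf {r | ∃ Z ⊆ X, Z.ncard = r ∧ 1 < Nat.card ((G.induce (X \ Z)).ConnectedComponent)}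

/-- A family `𝒞` of pairs `(C, cut(C))` of vertex sets is an `r`-cut decomposition of `G`. -/
def IsRCutDecomp (G : SimpleGraph V) (r : ℕ) (𝒞 : Set (Set V × Set V)) : Prop :=
  ∀ p ∈ 𝒞,
    p.1.ncard ≤ r ∧
    p.2 ⊆ openNbhdSet G p.1 ∧
    p.2.ncard ≤ conn G (p.1 ∪ p.2) ∧
    ∀ q ∈ 𝒞, p.1 ∩ q.2 = ∅ ∨ q.1 ⊆ p.1

/-- All edges of `G` lie within the vertex set `A` (we model graphs with vertex set `A ⊆ U`
as simple graphs on the ambient type `U` whose edges are confined to `A`). -/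
def EdgesWithin (G : SimpleGraph U) (A : Set U) : Prop :=
  ∀ u v, G.Adj u v → u ∈ A ∧ v ∈ A

/-- `(V1, V2)` is a split of the graph `G` with vertex set `A`: a partition of `A` into two
parts of size at least two such that all vertices of `V1` having at least one neighbor in
`V2` have the same neighborhood in `V2`. -/
def IsSplit (G : SimpleGraph U) (A V1 V2 : Set U) : Prop :=
  V1 ∪ V2 = A ∧ Disjoint V1 V2 ∧ 2 ≤ V1.ncard ∧ 2 ≤ V2.ncard ∧
    ∀ u ∈ V1, ∀ w ∈ V1, (∃ a ∈ V2, G.Adj u a) → (∃ a ∈ V2, G.Adj w a) →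
      ∀ a ∈ V2, (G.Adj u a ↔ G.Adj w a)

/-- `(G1, G2)` is a simple decomposition of the graph `G` (with vertex set `A`) with respect
to the split `(V1, V2)`, with marker vertex `x ∉ A`: `Gi` has vertex set `Vi ∪ {x}`,
`Gi[Vi] = G[Vi]`, and in `Gi` the marker `x` is adjacent exactly to the vertices of `Vi`
that have a neighbor in the other part in `G`. -/
def IsSimpleDecompWrt (G : SimpleGraph U) (A V1 V2 : Set U)
    (G1 G2 : SimpleGraph U) (x : U) : Prop :=
  x ∉ A ∧
  EdgesWithin G1 (V1 ∪ {x}) ∧ EdgesWithin G2 (V2 ∪ {x}) ∧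
  (∀ u ∈ V1, ∀ v ∈ V1, (G1.Adj u v ↔ G.Adj u v)) ∧
  (∀ u ∈ V2, ∀ v ∈ V2, (G2.Adj u v ↔ G.Adj u v)) ∧
  (∀ u, G1.Adj x u ↔ u ∈ V1 ∧ ∃ w ∈ V2, G.Adj u w) ∧
  (∀ u, G2.Adj x u ↔ u ∈ V2 ∧ ∃ w ∈ V1, G.Adj u w)

/-- `u` and `w` are twins: `N(u) \ {w} = N(w) \ {u}`. -/
def IsTwin (G : SimpleGraph V) (u w : V) : Prop :=
  G.neighborSet u \ {w} = G.neighborSet w \ {u}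

/-- The twin class of a vertex `u`. -/
def TwinClass (G : SimpleGraph V) (u : V) : Set V := {w | IsTwin G u w}

/-- The type of twin classes of `G`. -/
abbrev TwinClasses (G : SimpleGraph V) : Type _ := {C : Set V // ∃ u, C = TwinClass G u}

/-- The twin-quotient graph `G_nd`: its vertices are the twin classes of `G`, and two
distinct classes `[u]` and `[v]` are adjacent iff `{u, v}` is an edge of `G`. -/
def twinQuotient (G : SimpleGraph V) : SimpleGraph (TwinClasses G) where
  Adj C D := C ≠ D ∧ ∃ u ∈ C.1, ∃ v ∈ D.1, G.Adj u v
  symm := by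
    constructor
    rintro C D ⟨hne, u, hu, v, hv, h⟩
    exact ⟨hne.symm, v, hv, u, hu, h.symm⟩
  loopless := by
    constructor
    rintro C ⟨hne, -⟩
    exact hne rfl

/-!
Let `S` be a vi-set of minimum size. Then `r := cc(G − S)` is the same for all such sets, and `S`
is a minimum modulator for `coc_r(G)`. Among them take `S` minimising `∑_{(C, cut) ∈ 𝒞_r} |S ∩ C|`.
A redundant vertex of `S` could be dropped, merging it with at most one component, which would
give a smaller vi-set. Now let `N(C) \ S ⊆ cut`. If `|S ∩ (C ∪ cut)| < |cut| ≤ conn(C ∪ cut)`,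
then `(C ∪ cut) \ S` lies in one component of `G − S`. So a vertex of `S ∩ C` would be redundant,
and if `C ∩ S = ∅` and `|C| = r`, a vertex of `cut \ S` would give that component `r + 1`
vertices. Otherwise `(S \ C) ∪ cut` is again a minimum vi-set. By laminarity (d) its weight is
smaller unless `C ∩ S = ∅`. In that case `S ∩ (C ∪ cut) ⊆ cut` has at least `|cut|` elements, so
`cut ⊆ S`.
-/

section Components

variable {W : Type*} {G : SimpleGraph W}

lemma mem_openNbhdSet {C : Set W} {b : W} :
    b ∈ openNbhdSet G C ↔ (∃ a ∈ C, G.Adj a b) ∧ b ∉ C := by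
  simp [openNbhdSet]

lemma cc_le_iff {X : Type*} [Finite X] {H : SimpleGraph X} {n : ℕ} :
    cc H ≤ n ↔ ∀ c : H.ConnectedComponent, c.supp.ncard ≤ n := by
  have hbdd : BddAbove {k | ∃ c : H.ConnectedComponent, k = c.supp.ncard} :=
    ⟨Nat.card X, by
      rintro _ ⟨c, rfl⟩
      exact (Set.ncard_le_ncard c.supp.subset_univ).trans_eq (Set.ncard_univ X)⟩
  refine ⟨fun h c => (le_csSup hbdd ⟨c, rfl⟩).trans h, fun h => ?_⟩
  rcases Set.eq_empty_or_nonempty {k | ∃ c : H.ConnectedComponent, k = c.supp.ncard} with he | hne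
  · simp [cc, he]
  · exact csSup_le hne (by rintro _ ⟨c, rfl⟩; exact h c)

def compSupp (G : SimpleGraph W) (T : Set W) (c : (G.induce Tᶜ).ConnectedComponent) : Set W :=
  Subtype.val '' c.supp

variable {S T : Set W}

lemma mem_compSupp_mk {u : W} (hu : u ∉ T) :
    u ∈ compSupp G T ((G.induce Tᶜ).connectedComponentMk ⟨u, hu⟩) :=
  ⟨_, rfl, rfl⟩

lemma connectedComponentMk_eq_of_mem_compSupp {c : (G.induce Tᶜ).ConnectedComponent} {u : W}
    (h : u ∈ compSupp G T c) (hu : u ∉ T) : (G.induce Tᶜ).connectedComponentMk ⟨u, hu⟩ = c := by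
  obtain ⟨_, hu', rfl⟩ := h
  exact hu'

lemma disjoint_compSupp (c : (G.induce Tᶜ).ConnectedComponent) : Disjoint (compSupp G T c) T :=
  Set.disjoint_left.mpr <| by rintro _ ⟨u, -, rfl⟩; exact u.2

lemma adj_mem_compSupp {c : (G.induce Sᶜ).ConnectedComponent} {a b : W}
    (ha : a ∈ compSupp G S c) (hb : b ∉ S) (hab : G.Adj a b) : b ∈ compSupp G S c := by
  obtain ⟨a, ha, rfl⟩ := ha
  exact ⟨⟨b, hb⟩, c.mem_supp_of_adj_mem_supp ha (show (G.induce Sᶜ).Adj a ⟨b, hb⟩ from hab), rfl⟩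

lemma compSupp_subset_of_closed {A : Set W} {c : (G.induce Tᶜ).ConnectedComponent}
    (hex : (A ∩ compSupp G T c).Nonempty)
    (hA : ∀ a ∈ A, ∀ b ∈ compSupp G T c, G.Adj a b → b ∈ A) : compSupp G T c ⊆ A := by
  obtain ⟨_, hxA, x, hx, rfl⟩ := hex
  rintro _ ⟨w, hw, rfl⟩
  obtain ⟨p⟩ := c.reachable_of_mem_supp hx hw
  induction p with
  | nil => exact hxA
  | cons h p ih =>
    have hy := c.mem_supp_of_adj_mem_supp hx h
    exact ih hy (hA _ hxA _ ⟨_, hy, rfl⟩ h) hw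

lemma exists_compSupp_superset_of_disjoint (c : (G.induce Tᶜ).ConnectedComponent)
    (hS : Disjoint (compSupp G T c) S) :
    ∃ d : (G.induce Sᶜ).ConnectedComponent, compSupp G T c ⊆ compSupp G S d := by
  obtain ⟨u, hu⟩ := c.nonempty_supp
  have huS : (u : W) ∉ S := Set.disjoint_left.mp hS ⟨u, hu, rfl⟩
  refine ⟨_, compSupp_subset_of_closed ⟨u, mem_compSupp_mk huS, u, hu, rfl⟩ ?_⟩
  exact fun a ha b hb hab => adj_mem_compSupp ha (Set.disjoint_left.mp hS hb) hab

end Components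

section Deletion

variable {W : Type*} [Finite W] {G : SimpleGraph W} {S T : Set W}

lemma ccDel_le_iff {n : ℕ} :
    ccDel G T ≤ n ↔ ∀ c : (G.induce Tᶜ).ConnectedComponent, (compSupp G T c).ncard ≤ n := by
  simp only [ccDel, cc_le_iff, compSupp, Set.ncard_image_of_injective _ Subtype.val_injective]

lemma ncard_compSupp_le_ccDel (c : (G.induce Tᶜ).ConnectedComponent) :
    (compSupp G T c).ncard ≤ ccDel G T :=
  ccDel_le_iff.mp le_rfl c

lemma ncard_compSupp_le_ccDel_of_disjoint (c : (G.induce Tᶜ).ConnectedComponent)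
    (hS : Disjoint (compSupp G T c) S) : (compSupp G T c).ncard ≤ ccDel G S := by
  obtain ⟨d, hd⟩ := exists_compSupp_superset_of_disjoint c hS
  exact (Set.ncard_le_ncard hd).trans (ncard_compSupp_le_ccDel d)

lemma ccDel_le_card (G : SimpleGraph W) (T : Set W) : ccDel G T ≤ Nat.card W :=
  ccDel_le_iff.mpr fun _ => (Set.ncard_le_ncard (Set.subset_univ _)).trans_eq (Set.ncard_univ W)

lemma eq_univ_of_ccDel_eq_zero (h : ccDel G T = 0) : T = Set.univ := by
  refine Set.eq_univ_of_forall fun u => by_contra fun hu => ?_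
  have h0 := (ncard_compSupp_le_ccDel ((G.induce Tᶜ).connectedComponentMk ⟨u, hu⟩)).trans_eq h
  exact ((Set.ncard_pos (Set.toFinite _)).mpr ⟨u, mem_compSupp_mk hu⟩).ne' (Nat.le_zero.mp h0)

lemma ccDel_sdiff_singleton_le_of_redundant {v : W} (hred : Redundant G S v) :
    ccDel G (S \ {v}) ≤ ccDel G S + 1 := by
  refine ccDel_le_iff.mpr fun c => ?_
  have hout : ∀ w ∈ compSupp G (S \ {v}) c, w = v ∨ w ∉ S := fun w hw => by
    have := Set.disjoint_left.mp (disjoint_compSupp c) hw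
    simp only [Set.mem_sdiff, Set.mem_singleton_iff, not_and_not_right] at this
    tauto
  by_cases hvc : v ∉ compSupp G (S \ {v}) c
  · refine (ncard_compSupp_le_ccDel_of_disjoint c (Set.disjoint_left.mpr fun w hw hwS => ?_)).trans
      (Nat.le_succ _)
    rcases hout w hw with rfl | h
    exacts [hvc hw, h hwS]
  rw [not_not] at hvc
  by_cases hnb : ∃ b, G.Adj v b ∧ b ∉ S
  · obtain ⟨b, hvb, hbS⟩ := hnb
    obtain ⟨d, hd⟩ : ∃ d, ∀ w (hw : w ∉ S), G.Adj v w →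
        (G.induce Sᶜ).connectedComponentMk ⟨w, hw⟩ = d :=
      ⟨_, fun w hw hvw => hred ⟨⟨w, hw⟩, rfl, hvw⟩ ⟨⟨b, hbS⟩, rfl, hvb⟩⟩
    have hsub : compSupp G (S \ {v}) c ⊆ insert v (compSupp G S d) := by
      refine compSupp_subset_of_closed ⟨v, Set.mem_insert _ _, hvc⟩ fun a ha w hw haw => ?_
      rcases hout w hw with rfl | hwS
      · exact Set.mem_insert _ _
      rcases ha with rfl | ha
      · exact Set.mem_insert_of_mem _ (hd w hwS haw ▸ mem_compSupp_mk hwS)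
      · exact Set.mem_insert_of_mem _ (adj_mem_compSupp ha hwS haw)
    calc _ ≤ (insert v (compSupp G S d)).ncard := Set.ncard_le_ncard hsub
      _ ≤ (compSupp G S d).ncard + 1 := Set.ncard_insert_le _ _
      _ ≤ ccDel G S + 1 := by gcongr; exact ncard_compSupp_le_ccDel d
  · have hsub : compSupp G (S \ {v}) c ⊆ {v} := by
      refine compSupp_subset_of_closed ⟨v, rfl, hvc⟩ fun a ha w hw haw => ?_
      rcases hout w hw with rfl | hwS
      · rfl
      · exact absurd ⟨w, ha ▸ haw, hwS⟩ hnb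
    calc _ ≤ ({v} : Set W).ncard := Set.ncard_le_ncard hsub
      _ ≤ ccDel G S + 1 := by simp

lemma subset_compSupp_of_ncard_inter_lt_conn {X : Set W} (h : (S ∩ X).ncard < conn G X) {u : W}
    (hu : u ∈ X \ S) : X \ S ⊆ compSupp G S ((G.induce Sᶜ).connectedComponentMk ⟨u, hu.2⟩) := by
  have : Subsingleton (G.induce (X \ S)).ConnectedComponent := by
    refine Finite.card_le_one_iff_subsingleton.mp (not_lt.mp fun hlt => h.not_ge ?_)
    exact Nat.sInf_le ⟨S ∩ X, Set.inter_subset_right, rfl, by rwa [Set.sdiff_inter_self_eq_sdiff]⟩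
  intro w hw
  have hreach : (G.induce (X \ S)).Reachable ⟨w, hw⟩ ⟨u, hu⟩ :=
    ConnectedComponent.exact (Subsingleton.elim _ _)
  exact ⟨⟨w, hw.2⟩, ConnectedComponent.sound (hreach.map (G.induceHomOfLE fun _ hx => hx.2).toHom),
    rfl⟩

lemma ncard_sdiff_le_ccDel_of_ncard_inter_lt_conn {X : Set W} (h : (S ∩ X).ncard < conn G X) :
    (X \ S).ncard ≤ ccDel G S := by
  rcases (X \ S).eq_empty_or_nonempty with he | ⟨u, hu⟩
  · simp [he]
  · exact (Set.ncard_le_ncard (subset_compSupp_of_ncard_inter_lt_conn h hu)).trans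
      (ncard_compSupp_le_ccDel _)

lemma redundant_of_ncard_inter_lt_conn {X : Set W} {v : W} (h : (S ∩ X).ncard < conn G X)
    (hv : ∀ w, G.Adj v w → w ∉ S → w ∈ X) : Redundant G S v := by
  rintro _ ⟨w₁, rfl, h₁⟩ _ ⟨w₂, rfl, h₂⟩
  have hw₁ : (w₁ : W) ∈ X \ S := ⟨hv _ h₁ w₁.2, w₁.2⟩
  exact (connectedComponentMk_eq_of_mem_compSupp
    (subset_compSupp_of_ncard_inter_lt_conn h hw₁ ⟨hv _ h₂ w₂.2, w₂.2⟩) w₂.2).symm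

end Deletion

section Exchange

variable {W : Type*} [Finite W] {G : SimpleGraph W} {S C cut : Set W}

lemma ccDel_exchange_le (hCr : C.ncard ≤ ccDel G S) (hN : openNbhdSet G C \ S ⊆ cut) :
    ccDel G ((S \ C) ∪ cut) ≤ ccDel G S := by
  refine ccDel_le_iff.mpr fun c => ?_
  have hcT := Set.disjoint_left.mp (disjoint_compSupp c)
  by_cases hc : (C ∩ compSupp G _ c).Nonempty
  · refine (Set.ncard_le_ncard (compSupp_subset_of_closed hc fun a ha b hb hab => ?_)).trans hCr
    by_contra hbC
    by_cases hbS : b ∈ S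
    · exact hcT hb (Or.inl ⟨hbS, hbC⟩)
    · exact hcT hb (Or.inr (hN ⟨mem_openNbhdSet.mpr ⟨⟨a, ha, hab⟩, hbC⟩, hbS⟩))
  · refine ncard_compSupp_le_ccDel_of_disjoint c (Set.disjoint_left.mpr fun b hb hbS => ?_)
    by_cases hbC : b ∈ C
    · exact hc ⟨b, hbC, hb⟩
    · exact hcT hb (Or.inl ⟨hbS, hbC⟩)

lemma ncard_exchange_le (h : cut.ncard ≤ (S ∩ (C ∪ cut)).ncard) :
    ((S \ C) ∪ cut).ncard ≤ S.ncard := by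
  have hT : (S \ C) ∪ cut = (S \ (C ∪ cut)) ∪ cut := by
    ext
    simp only [Set.mem_union, Set.mem_sdiff]
    tauto
  have := Set.ncard_inter_add_ncard_sdiff_eq_ncard S (C ∪ cut)
  rw [hT]
  linarith [Set.ncard_union_le (S \ (C ∪ cut)) cut]

lemma ncard_inter_le_ncard_inter {D : Set W} (hcard : T.ncard ≤ S.ncard) (hD : S \ T ⊆ D) :
    (T ∩ D).ncard ≤ (S ∩ D).ncard := by
  have hST : S \ D ⊆ T \ D := fun x ⟨hxS, hxD⟩ => ⟨by_contra fun hxT => hxD (hD ⟨hxS, hxT⟩), hxD⟩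
  have := Set.ncard_le_ncard hST
  have := Set.ncard_inter_add_ncard_sdiff_eq_ncard S D
  have := Set.ncard_inter_add_ncard_sdiff_eq_ncard T D
  omega

noncomputable def cutWeight (𝒞 : Set (Set W × Set W)) (T : Set W) : ℕ :=
  ∑ q ∈ (Set.toFinite 𝒞).toFinset, (T ∩ q.1).ncard

lemma cutWeight_exchange_lt {𝒞 : Set (Set W × Set W)} {p : Set W × Set W} (hp : p ∈ 𝒞)
    (hlam : ∀ q ∈ 𝒞, q.1 ∩ p.2 = ∅ ∨ p.1 ⊆ q.1) (hdisj : Disjoint p.1 p.2)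
    (hcard : ((S \ p.1) ∪ p.2).ncard ≤ S.ncard) (hCS : (p.1 ∩ S).Nonempty) :
    cutWeight 𝒞 ((S \ p.1) ∪ p.2) < cutWeight 𝒞 S := by
  refine Finset.sum_lt_sum (fun q hq => ?_) ⟨p, (Set.toFinite 𝒞).mem_toFinset.mpr hp, ?_⟩
  · rcases hlam q ((Set.toFinite 𝒞).mem_toFinset.mp hq) with h | h
    · refine Set.ncard_le_ncard fun x ⟨hxT, hxq⟩ => ⟨?_, hxq⟩
      rcases hxT with hx | hx
      exacts [hx.1, absurd ⟨hxq, hx⟩ (Set.eq_empty_iff_forall_notMem.mp h x)]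
    · refine ncard_inter_le_ncard_inter hcard fun x ⟨hxS, hxT⟩ => h ?_
      exact by_contra fun hxC => hxT (Or.inl ⟨hxS, hxC⟩)
  · have hT : ((S \ p.1) ∪ p.2) ∩ p.1 = ∅ := by
      ext x
      simp only [Set.mem_inter_iff, Set.mem_union, Set.mem_sdiff, Set.mem_empty_iff_false,
        iff_false]
      rintro ⟨hx | hx, hxC⟩
      exacts [hx.2 hxC, Set.disjoint_left.mp hdisj hxC hx]
    rw [hT, Set.ncard_empty, Set.inter_comm]
    exact (Set.ncard_pos (Set.toFinite _)).mpr hCS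

end Exchange

section MinViSet

variable {W : Type*} {G : SimpleGraph W} {S T : Set W}

def IsMinViSet (G : SimpleGraph W) (S : Set W) : Prop :=
  IsViSet G S ∧ ∀ T, IsViSet G T → S.ncard ≤ T.ncard

lemma vi_le (G : SimpleGraph W) (X : Set W) : vi G ≤ X.ncard + ccDel G X :=
  Nat.sInf_le ⟨X, rfl⟩

lemma IsMinViSet.ccDel_eq (hS : IsMinViSet G S) (hT : IsMinViSet G T) :
    ccDel G S = ccDel G T := by
  have := hS.2 T hT.1
  have := hT.2 S hS.1
  have := hS.1.symm.trans hT.1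
  omega

lemma IsMinViSet.of_le (hS : IsMinViSet G S) (hccDel : ccDel G T ≤ ccDel G S)
    (hcard : T.ncard ≤ S.ncard) : IsMinViSet G T := by
  have hvi : vi G = S.ncard + ccDel G S := hS.1
  have hT : IsViSet G T := le_antisymm (vi_le G T) (by omega)
  exact ⟨hT, fun U hU => hcard.trans (hS.2 U hU)⟩

lemma IsMinViSet.isMinModulator (hS : IsMinViSet G S) : IsMinModulator G (ccDel G S) S :=
  ⟨le_rfl, fun T hT => by
    have hvi : vi G = S.ncard + ccDel G S := hS.1
    have := vi_le G T
    unfold IsModulator at hT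
    omega⟩

variable [Finite W]

lemma exists_isMinViSet (G : SimpleGraph W) : ∃ S, IsMinViSet G S := by
  obtain ⟨X, hX⟩ := Nat.sInf_mem
    (⟨_, ∅, rfl⟩ : {n | ∃ X : Set W, n = X.ncard + ccDel G X}.Nonempty)
  obtain ⟨S, hS, hmin⟩ :=
    Set.exists_min_image {S | IsViSet G S} Set.ncard (Set.toFinite _) ⟨X, hX⟩
  exact ⟨S, hS, hmin⟩

lemma exists_isMinViSet_minimizing (G : SimpleGraph W) (f : Set W → ℕ) :
    ∃ S, IsMinViSet G S ∧ ∀ T, IsMinViSet G T → f S ≤ f T :=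
  Set.exists_min_image {S | IsMinViSet G S} f (Set.toFinite _) (exists_isMinViSet G)

lemma IsMinViSet.not_redundant (hS : IsMinViSet G S) {v : W} (hv : v ∈ S) :
    ¬ Redundant G S v := fun hred => by
  have hccDel := ccDel_sdiff_singleton_le_of_redundant hred
  have hcard := Set.ncard_sdiff_singleton_add_one hv
  have hvi : vi G = S.ncard + ccDel G S := hS.1
  have := hS.2 (S \ {v}) (le_antisymm (vi_le G _) (by omega))
  omega

lemma IsMinViSet.one_le_ccDel [Nonempty W] (hS : IsMinViSet G S) : 1 ≤ ccDel G S := by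
  by_contra! h
  have huniv := eq_univ_of_ccDel_eq_zero (Nat.lt_one_iff.mp h)
  have hvi : vi G = S.ncard + ccDel G S := hS.1
  rw [huniv, Set.ncard_univ] at hvi
  have hempty : IsViSet G ∅ := by
    have := ccDel_le_card G (∅ : Set W)
    exact le_antisymm (vi_le G ∅) (by rw [Set.ncard_empty]; omega)
  have := hS.2 ∅ hempty
  rw [huniv, Set.ncard_univ, Set.ncard_empty] at this
  exact Nat.card_pos.ne' (Nat.le_zero.mp this)

lemma IsMinViSet.inter_eq_empty_of_cutWeight_le (hS : IsMinViSet G S)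
    {𝒞 : Set (Set W × Set W)} {p : Set W × Set W}
    (hdec : IsRCutDecomp G (ccDel G S) 𝒞)
    (hmin : ∀ T, IsMinViSet G T → cutWeight 𝒞 S ≤ cutWeight 𝒞 T) (hp : p ∈ 𝒞)
    (hN : openNbhdSet G p.1 \ S ⊆ p.2) : p.1 ∩ S = ∅ := by
  obtain ⟨hCr, hcutN, hconn, -⟩ := hdec p hp
  refine Set.eq_empty_of_forall_notMem fun v ⟨hvC, hvS⟩ => ?_
  rcases lt_or_ge (S ∩ (p.1 ∪ p.2)).ncard p.2.ncard with hlt | hge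
  · refine hS.not_redundant hvS (redundant_of_ncard_inter_lt_conn (hlt.trans_le hconn) ?_)
    intro w hvw hwS
    by_cases hwC : w ∈ p.1
    · exact Or.inl hwC
    · exact Or.inr (hN ⟨mem_openNbhdSet.mpr ⟨⟨v, hvC, hvw⟩, hwC⟩, hwS⟩)
  · have hdisj : Disjoint p.1 p.2 :=
      Set.disjoint_right.mpr fun _ hx => (mem_openNbhdSet.mp (hcutN hx)).2
    have hcard := ncard_exchange_le hge
    have hlam q (hq : q ∈ 𝒞) := (hdec q hq).2.2.2 p hp
    exact (hmin _ (hS.of_le (ccDel_exchange_le hCr hN) hcard)).not_gt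
      (cutWeight_exchange_lt hp hlam hdisj hcard ⟨v, hvC, hvS⟩)

lemma cut_subset_of_ncard_eq_ccDel {𝒞 : Set (Set W × Set W)} {p : Set W × Set W}
    (hdec : IsRCutDecomp G (ccDel G S) 𝒞) (hp : p ∈ 𝒞) (hCS : p.1 ∩ S = ∅)
    (hCr : p.1.ncard = ccDel G S) : p.2 ⊆ S := by
  obtain ⟨-, hcutN, hconn, -⟩ := hdec p hp
  have hCS' : Disjoint p.1 S := Set.disjoint_iff_inter_eq_empty.mpr hCS
  rcases lt_or_ge (S ∩ (p.1 ∪ p.2)).ncard p.2.ncard with hlt | hge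
  · intro y hy
    by_contra hyS
    have hyC : y ∉ p.1 := (mem_openNbhdSet.mp (hcutN hy)).2
    have hsub : insert y p.1 ⊆ (p.1 ∪ p.2) \ S :=
      Set.insert_subset ⟨Or.inr hy, hyS⟩ fun x hx => ⟨Or.inl hx, Set.disjoint_left.mp hCS' hx⟩
    have := (Set.ncard_le_ncard hsub).trans
      (ncard_sdiff_le_ccDel_of_ncard_inter_lt_conn (hlt.trans_le hconn))
    rw [Set.ncard_insert_of_notMem hyC] at this
    omega
  · have hsub : S ∩ (p.1 ∪ p.2) ⊆ p.2 := fun x ⟨hxS, hx⟩ =>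
      hx.resolve_left fun hxC => Set.disjoint_left.mp hCS' hxC hxS
    exact (Set.eq_of_subset_of_ncard_le hsub hge).symm.subset.trans Set.inter_subset_left

end MinViSet

/-- Given, for each `1 ≤ r ≤ |V(G)|`, an `r`-cut decomposition `𝒞 r` of `G`,
there exists a vi-set `S` of `G` such that (1) `S` contains no redundant vertex, and
(2) there exists `r` such that `S` is a minimum-size modulator for `coc_r(G)` and `S`
together with `𝒞 r` satisfies the two cut-decomposition conditions. -/
theorem stmt_6 {V : Type*} [Fintype V] (G : SimpleGraph V)
    (𝒞 : ℕ → Set (Set V × Set V))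
    (h𝒞 : ∀ r : ℕ, 1 ≤ r → r ≤ Fintype.card V → IsRCutDecomp G r (𝒞 r)) :
    ∃ S : Set V, IsViSet G S ∧ (∀ v ∈ S, ¬ Redundant G S v) ∧
      ∃ r : ℕ, IsMinModulator G r S ∧
        ∀ p ∈ 𝒞 r,
          (openNbhdSet G p.1 \ S ⊆ p.2 → p.1 ∩ S = ∅) ∧
          (openNbhdSet G p.1 \ S ⊆ p.2 → p.1.ncard = r → p.2 ⊆ S) := by
  obtain ⟨S₀, hS₀⟩ := exists_isMinViSet G
  obtain ⟨S, hS, hmin⟩ := exists_isMinViSet_minimizing G (cutWeight (𝒞 (ccDel G S₀)))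
  rw [← hS.ccDel_eq hS₀] at hmin
  refine ⟨S, hS.1, fun v hv => hS.not_redundant hv, ccDel G S, hS.isMinModulator, fun p hp => ?_⟩
  rcases isEmpty_or_nonempty V with hV | hV
  · exact ⟨fun _ => Set.eq_empty_of_isEmpty _, fun _ _ x => isEmptyElim x⟩
  have hdec := h𝒞 _ hS.one_le_ccDel ((ccDel_le_card G S).trans_eq Nat.card_eq_fintype_card)
  have hCS := hS.inter_eq_empty_of_cutWeight_le hdec hmin hp
  exact ⟨hCS, fun hN hCr => cut_subset_of_ncard_eq_ccDel hdec hp (hCS hN) hCr⟩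

end ParamReport
end

section
/- Let G be a finite simple undirected graph, let S be a vi-set of G, and let v ∈ S be a redundant vertex with respect to S. Then cc(G − (S \ {v})) = cc(G − S) + 1. -/
namespace ParamReport

open SimpleGraph

variable {V : Type*} {U : Type*}

/-
Deleting `S \ {v}` instead of `S` only adds the vertex `v` back. A component of the new graph
that avoids `v` is a component of `G − S`; the component containing `v` consists of `v` and
the components of `G − S` that `v` sees, of which there is at most one when `v` is redundant.
Hence `cc(G − (S \ {v})) ≤ cc(G − S) + 1`. Conversely, `|S \ {v}| = |S| - 1`, so minimality of
the vi-set `S` forces `cc(G − (S \ {v})) ≥ cc(G − S) + 1`.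
-/

section LargestComponent

variable {W : Type*} (H : SimpleGraph W)

lemma bddAbove_ncard_supp [Finite W] :
    BddAbove {n | ∃ c : H.ConnectedComponent, n = c.supp.ncard} := by
  refine ⟨Nat.card W, ?_⟩
  rintro n ⟨c, rfl⟩
  simpa [Set.ncard_univ] using Set.ncard_le_ncard (Set.subset_univ c.supp)

lemma ncard_supp_le_cc [Finite W] (c : H.ConnectedComponent) : c.supp.ncard ≤ cc H :=
  le_csSup (bddAbove_ncard_supp H) ⟨c, rfl⟩

lemma cc_le_of_forall_ncard_supp_le {m : ℕ} (h : ∀ c : H.ConnectedComponent, c.supp.ncard ≤ m) :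
    cc H ≤ m := by
  rcases Set.eq_empty_or_nonempty {n | ∃ c : H.ConnectedComponent, n = c.supp.ncard} with he | hne
  · simp [cc, he]
  · exact csSup_le hne (by rintro n ⟨c, rfl⟩; exact h c)

end LargestComponent

section InsertVertex

variable {G : SimpleGraph V} {A : Set V} {v : V}

lemma val_mem_image_supp_of_adj {D : (G.induce A).ConnectedComponent} {x y : V}
    (hx : x ∈ Subtype.val '' D.supp) (hy : y ∈ A) (hxy : G.Adj x y) :
    y ∈ Subtype.val '' D.supp := by
  obtain ⟨x, hxD, rfl⟩ := hx
  exact ⟨⟨y, hy⟩, D.mem_supp_of_adj_mem_supp hxD (comap_adj.mpr hxy), rfl⟩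

lemma image_supp_subset_insert_image_supp
    (hv : {c : (G.induce A).ConnectedComponent | ∃ w ∈ c.supp, G.Adj v w}.Subsingleton)
    (c : (G.induce (insert v A)).ConnectedComponent) {u : V} (hu : u ∈ A)
    (huc : ⟨u, Set.mem_insert_of_mem v hu⟩ ∈ c.supp) :
    Subtype.val '' c.supp ⊆
      insert v (Subtype.val '' ((G.induce A).connectedComponentMk ⟨u, hu⟩).supp) := by
  set D := (G.induce A).connectedComponentMk ⟨u, hu⟩
  let P : ↥(insert v A) → Prop := fun x =>
    (x : V) ∈ Subtype.val '' D.supp ∨ (x : V) = v ∧ ∃ w ∈ D.supp, G.Adj v w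
  have hstep : ∀ x y, (G.induce (insert v A)).Adj x y → P x → P y := by
    rintro ⟨x, hx⟩ ⟨y, hy⟩ hxy hPx
    replace hxy : G.Adj x y := comap_adj.mp hxy
    by_cases hyv : y = v
    · subst hyv
      refine Or.inr ⟨rfl, ?_⟩
      rcases hPx with ⟨x', hx', rfl⟩ | ⟨-, h⟩
      · exact ⟨x', hx', hxy.symm⟩
      · exact h
    · have hyA : y ∈ A := (Set.mem_insert_iff.mp hy).resolve_left hyv
      refine Or.inl ?_
      rcases hPx with hx | ⟨hxv, w, hw, hvw⟩
      · exact val_mem_image_supp_of_adj hx hyA hxy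
      · have hvy : G.Adj v y := (show x = v from hxv) ▸ hxy
        have hyD : (G.induce A).connectedComponentMk ⟨y, hyA⟩ = D :=
          hv ⟨⟨y, hyA⟩, rfl, hvy⟩ ⟨w, hw, hvw⟩
        exact ⟨⟨y, hyA⟩, hyD, rfl⟩
  rintro _ ⟨x, hxc, rfl⟩
  have hPx : P x := by
    have hreach := (reachable_iff_reflTransGen _ _).mp (c.reachable_of_mem_supp huc hxc)
    clear hxc
    induction hreach with
    | refl => exact Or.inl ⟨⟨u, hu⟩, rfl, rfl⟩
    | tail _ hab ih => exact hstep _ _ hab ih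
  rcases hPx with hx | ⟨hxv, -⟩
  · exact Or.inr hx
  · exact Or.inl hxv

lemma cc_induce_insert_le [Finite V]
    (hv : {c : (G.induce A).ConnectedComponent | ∃ w ∈ c.supp, G.Adj v w}.Subsingleton) :
    cc (G.induce (insert v A)) ≤ cc (G.induce A) + 1 := by
  refine cc_le_of_forall_ncard_supp_le _ fun c => ?_
  rw [← Set.ncard_image_of_injective _ Subtype.val_injective]
  by_cases h : ∃ x ∈ c.supp, (x : V) ∈ A
  · obtain ⟨x, hxc, hxA⟩ := h
    set D := (G.induce A).connectedComponentMk ⟨x, hxA⟩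
    calc (Subtype.val '' c.supp).ncard
        ≤ (insert v (Subtype.val '' D.supp)).ncard :=
          Set.ncard_le_ncard (image_supp_subset_insert_image_supp hv c hxA hxc)
      _ ≤ (Subtype.val '' D.supp).ncard + 1 := Set.ncard_insert_le _ _
      _ = D.supp.ncard + 1 := by rw [Set.ncard_image_of_injective _ Subtype.val_injective]
      _ ≤ cc (G.induce A) + 1 := by gcongr; exact ncard_supp_le_cc _ D
  · push Not at h
    calc (Subtype.val '' c.supp).ncard ≤ ({v} : Set V).ncard := by
          refine Set.ncard_le_ncard ?_
          rintro _ ⟨x, hx, rfl⟩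
          exact (Set.mem_insert_iff.mp x.2).resolve_right (h x hx)
      _ ≤ cc (G.induce A) + 1 := by simp

end InsertVertex

lemma ccDel_diff_singleton_le_of_redundant [Finite V] {G : SimpleGraph V} {S : Set V} {v : V}
    (hred : Redundant G S v) : ccDel G (S \ {v}) ≤ ccDel G S + 1 := by
  rw [ccDel, Set.compl_sdiff, Set.singleton_union]
  exact cc_induce_insert_le hred

lemma IsViSet.ncard_add_ccDel_le {G : SimpleGraph V} {S : Set V} (hS : IsViSet G S)
    (T : Set V) : S.ncard + ccDel G S ≤ T.ncard + ccDel G T :=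
  hS ▸ Nat.sInf_le ⟨T, rfl⟩

/-- If `S` is a vi-set of `G` and `v ∈ S` is a redundant vertex with
respect to `S`, then `cc(G − (S \ {v})) = cc(G − S) + 1`. -/
theorem stmt_11 {V : Type*} [Fintype V] (G : SimpleGraph V) (S : Set V) (v : V)
    (hS : IsViSet G S) (hv : v ∈ S) (hred : Redundant G S v) :
    ccDel G (S \ {v}) = ccDel G S + 1 := by
  have hcard : (S \ {v}).ncard + 1 = S.ncard := Set.ncard_sdiff_singleton_add_one hv S.toFinite
  have hmin := hS.ncard_add_ccDel_le (S \ {v})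
  have hred_le := ccDel_diff_singleton_le_of_redundant hred
  omega

end ParamReport
end
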